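/- Characterization of the integer minimizer via the continuous threshold: let ρ ∈ (0,1), b₀ > 0, c > 0 with b₀(1-ρ²) > c, and F(N) = b₀ρ^{2N} + cN on ℕ. Define t* = (1/(2|ln ρ|))·ln(b₀(1-ρ²)/c). Then the smallest minimizer N* of F over ℕ satisfies ⌈t*⌉ - 1 ≤ N* ≤ ⌈t*⌉ + 1. -/
import Mathlib


theorem integer_minimizer_near_threshold (ρ b₀ c : ℝ)
    (hρ0 : 0 < ρ) (hρ1 : ρ < 1) (hb₀ : 0 < b₀) (hc : 0 < c)
    (hdom : b₀ * (1 - ρ ^ 2) > c)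
    (F : ℕ → ℝ) (hF : ∀ N, F N = b₀ * ρ ^ (2 * N) + c * N) :
    ∀ Nstar : ℕ,
      ((∀ N, F Nstar ≤ F N) ∧ (∀ M : ℕ, (∀ N, F M ≤ F N) → Nstar ≤ M)) →
      ⌈1 / (2 * |Real.log ρ|) * Real.log (b₀ * (1 - ρ ^ 2) / c)⌉ - 1 ≤ (Nstar : ℤ) ∧
      (Nstar : ℤ) ≤ ⌈1 / (2 * |Real.log ρ|) * Real.log (b₀ * (1 - ρ ^ 2) / c)⌉ + 1 := by
  intro Nstar ⟨hmin, hleast⟩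
  have hL : Real.log ρ < 0 := Real.log_neg hρ0 hρ1
  have h1ρ2 : 0 < 1 - ρ ^ 2 := by nlinarith
  set t : ℝ := 1 / (2 * |Real.log ρ|) * Real.log (b₀ * (1 - ρ ^ 2) / c) with hti
  have hb1 : 0 < b₀ * (1 - ρ ^ 2) := by positivity
  have ht : t = (Real.log (b₀ * (1 - ρ ^ 2)) - Real.log c) / (2 * (-Real.log ρ)) := by
    rw [hti, abs_of_neg hL, Real.log_div (ne_of_gt hb1) (ne_of_gt hc)]
    ring
  -- key sign characterization
  have key : ∀ N : ℕ, ((N : ℝ) < t ↔ c < b₀ * (1 - ρ ^ 2) * ρ ^ (2 * N)) := by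
    intro N
    have hx : 0 < b₀ * (1 - ρ ^ 2) * ρ ^ (2 * N) := by positivity
    rw [← Real.log_lt_log_iff hc hx, Real.log_mul (ne_of_gt hb1) (by positivity),
      Real.log_pow, ht, lt_div_iff₀ (by linarith)]
    push_cast
    constructor <;> intro h <;> nlinarith
  -- forward difference formula
  have hdiff : ∀ N : ℕ, F (N + 1) - F N = c - b₀ * (1 - ρ ^ 2) * ρ ^ (2 * N) := by
    intro N
    have : ρ ^ (2 * (N + 1)) = ρ ^ (2 * N) * ρ ^ 2 := by
      rw [← pow_add]; ring_nf
    rw [hF, hF, this]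
    push_cast
    ring
  have ht_pos : 0 < t := by
    rw [ht]
    apply div_pos _ (by linarith)
    have : Real.log c < Real.log (b₀ * (1 - ρ ^ 2)) :=
      (Real.log_lt_log_iff hc hb1).2 hdom
    linarith
  constructor
  · -- lower bound
    by_contra h
    push_neg at h
    have h1 : (Nstar : ℤ) + 1 < ⌈t⌉ := by omega
    have h2 : ((Nstar : ℤ) + 1 : ℝ) < t := by
      exact_mod_cast Int.lt_ceil.mp h1
    have h3 : (Nstar : ℝ) < t := by push_cast at h2 ⊢; linarith
    have h4 := (key Nstar).1 h3
    have h5 := hdiff Nstar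
    have := hmin (Nstar + 1)
    linarith
  · -- upper bound
    by_contra h
    push_neg at h
    have hceil : (1 : ℤ) ≤ ⌈t⌉ := by
      have := Int.lt_ceil.mpr (show ((0:ℤ):ℝ) < t by exact_mod_cast ht_pos)
      omega
    have hN1 : 1 ≤ Nstar := by
      have : (2 : ℤ) ≤ (Nstar : ℤ) := by omega
      exact_mod_cast (by omega : (1 : ℤ) ≤ (Nstar : ℤ))
    set M := Nstar - 1 with hM
    have hMN : M + 1 = Nstar := by omega
    have hMt : ¬((M : ℝ) < t) := by
      intro hlt
      have h1 : t ≤ (⌈t⌉ : ℝ) := Int.le_ceil t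
      have h2 : (⌈t⌉ : ℤ) + 1 ≤ (M : ℤ) := by omega
      have h3 : ((⌈t⌉ : ℤ) : ℝ) + 1 ≤ (M : ℝ) := by exact_mod_cast h2
      linarith
    have hD : b₀ * (1 - ρ ^ 2) * ρ ^ (2 * M) ≤ c := by
      by_contra hD
      push_neg at hD
      exact hMt ((key M).2 hD)
    have hFM : F M ≤ F Nstar := by
      have := hdiff M
      rw [hMN] at this
      linarith
    have hMmin : ∀ N, F M ≤ F N := fun N => le_trans hFM (hmin N)
    have := hleast M hMmin
    omega
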